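/- Let F be monotone on a closed convex set Z and α > 0, ψ strongly convex differentiable. If ẑ ∈ int dom ψ ∩ Z solves VI(Z, G_ρ) with G_ρ(z) = F(z) + α(∇ψ(z) − ∇ψ(ρ)), and z* ∈ Z solves VI(Z, F), then ⟨∇ψ(ẑ) − ∇ψ(ρ), z* − ẑ⟩ ≥ 0. -/

import Mathlib

/-!
Monotonicity of `F` makes the solution `z*` of `VI(Z, F)` a Minty solution, so
`⟪F ẑ, z* - ẑ⟫ ≤ 0`; testing the regularized VI at `z*` then leaves
`α ⟪∇ψ(ẑ) - ∇ψ(ρ), z* - ẑ⟫ ≥ 0`.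
-/

open scoped RealInnerProductSpace

/-- Bregman divergence of `ψ` with gradient map `g`. -/
noncomputable def breg {E : Type*} [NormedAddCommGroup E] [InnerProductSpace ℝ E]
    (ψ : E → ℝ) (g : E → E) (a b : E) : ℝ :=
  ψ a - ψ b - ⟪g b, a - b⟫

section

variable {E : Type*} [NormedAddCommGroup E] [InnerProductSpace ℝ E]

def IsVISolution (Z : Set E) (G : E → E) (z : E) : Prop :=
  z ∈ Z ∧ ∀ y ∈ Z, 0 ≤ ⟪G z, y - z⟫

theorem IsVISolution.inner_sub_nonpos {Z : Set E} {F : E → E} {zs z : E}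
    (hzs : IsVISolution Z F zs) (hF : ∀ u ∈ Z, ∀ v ∈ Z, 0 ≤ ⟪F u - F v, u - v⟫)
    (hz : z ∈ Z) : ⟪F z, zs - z⟫ ≤ 0 := by
  have hmono := hF z hz zs hzs.1
  have hsol := hzs.2 z hz
  rw [inner_sub_left] at hmono
  rw [← neg_sub z zs, inner_neg_right]
  linarith

end

theorem regularized_gradient_inequality_general {E : Type*} [NormedAddCommGroup E]
    [InnerProductSpace ℝ E]
    (Z : Set E) (F : E → E)
    (hF : ∀ u ∈ Z, ∀ v ∈ Z, ⟪F u - F v, u - v⟫ ≥ 0)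
    (g : E → E) (D : Set E)
    (α : ℝ) (hα : 0 < α) (ρ : E)
    (zh : E) (hzh : zh ∈ interior D ∩ Z)
    (hVIr : ∀ z ∈ Z, ⟪F zh + α • (g zh - g ρ), z - zh⟫ ≥ 0)
    (zs : E) (hzs : zs ∈ Z) (hVI : ∀ z ∈ Z, ⟪F zs, z - zs⟫ ≥ 0) :
    ⟪g zh - g ρ, zs - zh⟫ ≥ 0 := by
  have hminty : ⟪F zh, zs - zh⟫ ≤ 0 :=
    IsVISolution.inner_sub_nonpos ⟨hzs, hVI⟩ hF hzh.2
  have hreg := hVIr zs hzs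
  rw [inner_add_left, real_inner_smul_left] at hreg
  exact nonneg_of_mul_nonneg_right (by linarith) hα

/-- Key inequality: `⟨∇ψ(ẑ) - ∇ψ(ρ), z* - ẑ⟩ ≥ 0` for a Nash equilibrium `z*` and the
solution `ẑ` of the regularized VI with reference `ρ`. -/
theorem regularized_gradient_inequality {E : Type*} [NormedAddCommGroup E]
    [InnerProductSpace ℝ E]
    (Z : Set E) (hZc : IsClosed Z) (hZ : Convex ℝ Z) (F : E → E)
    (hF : ∀ u ∈ Z, ∀ v ∈ Z, ⟪F u - F v, u - v⟫ ≥ 0)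
    (ψ : E → ℝ) (g : E → E) (D : Set E) (μ : ℝ) (hμ : 0 < μ)
    (hsc : ∀ x y : E, ψ y ≥ ψ x + ⟪g x, y - x⟫ + μ / 2 * ‖y - x‖ ^ 2)
    (α : ℝ) (hα : 0 < α) (ρ : E)
    (zh : E) (hzh : zh ∈ interior D ∩ Z)
    (hVIr : ∀ z ∈ Z, ⟪F zh + α • (g zh - g ρ), z - zh⟫ ≥ 0)
    (zs : E) (hzs : zs ∈ Z) (hVI : ∀ z ∈ Z, ⟪F zs, z - zs⟫ ≥ 0) :
    ⟪g zh - g ρ, zs - zh⟫ ≥ 0 :=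
  regularized_gradient_inequality_general Z F hF g D α hα ρ zh hzh hVIr zs hzs hVI
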